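/- The graph G₂ has exactly one divisor class of degree 2 and Baker–Norine rank at least 1; equivalently, there is a unique class [D] ∈ Pic(G₂) with deg(D) = 2 and r(D) ≥ 1. -/

import Mathlib

open scoped Classical

namespace BNGraph

variable {V : Type} [Fintype V]

/-- The degree of a divisor `D : V → ℤ`: the sum of its values. -/
def degSum (D : V → ℤ) : ℤ := ∑ v, D v

/-- A divisor is effective if all its values are nonnegative. -/
def Effective (D : V → ℤ) : Prop := ∀ v, 0 ≤ D v

/-- The combinatorial Laplacian of a graph, as a homomorphism on divisors. -/
noncomputable def lap (G : SimpleGraph V) : (V → ℤ) →+ (V → ℤ) where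
  toFun f := fun v => (G.degree v : ℤ) * f v - ∑ w ∈ G.neighborFinset v, f w
  map_zero' := by
    funext v; simp
  map_add' f g := by
    funext v
    simp only [Pi.add_apply, Finset.sum_add_distrib]
    ring

/-- The subgroup of principal divisors: the image of the Laplacian. -/
noncomputable def Principal (G : SimpleGraph V) : AddSubgroup (V → ℤ) := (lap G).range

/-- Linear equivalence of divisors. -/
def LinEquiv (G : SimpleGraph V) (D D' : V → ℤ) : Prop := D - D' ∈ Principal G

/-- A divisor is winnable if it is linearly equivalent to an effective divisor. -/
def Winnable (G : SimpleGraph V) (D : V → ℤ) : Prop :=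
  ∃ E : V → ℤ, Effective E ∧ LinEquiv G D E

/-- The Baker–Norine rank of a divisor: the largest `r ≥ 0` such that `D - E` is
winnable for every effective divisor `E` of degree `r`, or `-1` if there is no such `r`
(equivalently, if `D` itself is not winnable). -/
noncomputable def bnRank (G : SimpleGraph V) (D : V → ℤ) : ℤ :=
  sSup {r : ℤ | r = -1 ∨ (0 ≤ r ∧
    ∀ E : V → ℤ, Effective E → degSum E = r → Winnable G (D - E))}

/-- The Picard group of a graph: divisors modulo principal divisors. -/
abbrev Pic (G : SimpleGraph V) : Type _ := (V → ℤ) ⧸ Principal G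

/-- The number of divisor classes of degree `d` and Baker–Norine rank `r`. -/
noncomputable def numClasses (G : SimpleGraph V) (d r : ℤ) : ℕ :=
  Set.ncard {c : Pic G | ∃ D : V → ℤ,
    QuotientAddGroup.mk' (Principal G) D = c ∧ degSum D = d ∧ bnRank G D = r}

/-- Two graphs have the same two-variable zeta function iff for every degree `d` and
rank `r` they have the same number of divisor classes of degree `d` and rank `r`. -/
def SameZeta {W : Type} [Fintype W] (G : SimpleGraph V) (G' : SimpleGraph W) : Prop :=
  ∀ d r : ℤ, numClasses G d r = numClasses G' d r

/-- Degree as a homomorphism on divisors. -/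
def degHom : (V → ℤ) →+ ℤ where
  toFun := degSum
  map_zero' := by simp [degSum]
  map_add' f g := by simp [degSum, Finset.sum_add_distrib]

/-- The subgroup of divisors of degree zero. -/
def Deg0 (V : Type) [Fintype V] : AddSubgroup (V → ℤ) := (degHom (V := V)).ker

/-- The Jacobian of a graph: divisor classes of degree zero. -/
noncomputable abbrev Jac (G : SimpleGraph V) : Type _ :=
  Deg0 V ⧸ ((Principal G).addSubgroupOf (Deg0 V))

/-- The number of connected components of the spanning subgraph with edge set `A`. -/
noncomputable def numComponents (V : Type) [Fintype V] (A : Set (Sym2 V)) : ℕ :=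
  Nat.card (SimpleGraph.fromEdgeSet A).ConnectedComponent

/-- The number of edges of a graph. -/
noncomputable def edgeCount (G : SimpleGraph V) : ℕ := Nat.card G.edgeSet

open MvPolynomial in
/-- The Tutte polynomial of `G`, as a polynomial in `ℤ[x, y]` with `x = X 0`, `y = X 1`:
`T_G(x,y) = Σ_{A ⊆ E(G)} (x−1)^(c(A)−c(E(G))) (y−1)^(c(A)+|A|−|V(G)|)`. -/
noncomputable def tutte (G : SimpleGraph V) : MvPolynomial (Fin 2) ℤ :=
  ∑ A ∈ G.edgeFinset.powerset,
    (X 0 - 1) ^ (numComponents V ↑A - numComponents V G.edgeSet) *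
    (X 1 - 1) ^ (numComponents V ↑A + A.card - Fintype.card V)


/-- `G₂`: the diamond graph (`K₄` minus an edge) on vertices `0,1,2,3`
(with `u = 0`, `v = 1` of degree 3 and `x = 2`, `y = 3` of degree 2),
with a triangle `2,4,5` attached at the vertex `x = 2`. -/
def G2 : SimpleGraph (Fin 6) :=
  SimpleGraph.fromEdgeSet
    {s(0,1), s(0,2), s(0,3), s(1,2), s(1,3), s(2,4), s(2,5), s(4,5)}

/-!
The divisor `u + v` has rank at least one: for every vertex `w`, an explicit firing script shows
`u + v - w ~ w'` for some vertex `w'`. Conversely, if `deg D = 2` and `r(D) ≥ 1`, then `D - u` and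
`D - v` are winnable of degree one, hence `D ~ u + a` and `D ~ v + b` for vertices `a`, `b`.
The weights `c = (19, 1, 10, 22, 18, 2)` satisfy `Δ c ≡ 0 mod 24` (`G₂` has 24 spanning trees),
so by symmetry of `Δ` the map `D ↦ ∑ c(w) D(w) mod 24` is constant on linear equivalence
classes; comparing its values on `u + a` and `v + b` forces `a = v`, that is `D ~ u + v`.
-/

section General

open Matrix

variable (G : SimpleGraph V)

lemma lap_eq_lapMatrix_mulVec (f : V → ℤ) : lap G f = G.lapMatrix ℤ *ᵥ f := by
  ext v
  rw [SimpleGraph.lapMatrix_mulVec_apply]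
  rfl

lemma sum_mul_lap_comm (g f : V → ℤ) : ∑ v, g v * lap G f v = ∑ v, lap G g v * f v := by
  simp only [lap_eq_lapMatrix_mulVec]
  change g ⬝ᵥ (G.lapMatrix ℤ *ᵥ f) = (G.lapMatrix ℤ *ᵥ g) ⬝ᵥ f
  rw [Matrix.dotProduct_mulVec, ← Matrix.mulVec_transpose, (G.isSymm_lapMatrix (R := ℤ)).eq]

lemma degSum_lap (f : V → ℤ) : degSum (lap G f) = 0 := by
  have h := sum_mul_lap_comm G (fun _ => 1) f
  rw [lap_eq_lapMatrix_mulVec G (fun _ => 1), SimpleGraph.lapMatrix_mulVec_const_eq_zero] at h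
  simpa [degSum] using h

variable {G}

lemma degSum_sub (D E : V → ℤ) : degSum (D - E) = degSum D - degSum E :=
  map_sub (degHom (V := V)) D E

lemma LinEquiv.degSum_eq {D D' : V → ℤ} (h : LinEquiv G D D') : degSum D = degSum D' := by
  obtain ⟨f, hf⟩ := h
  have := degSum_lap G f
  rw [hf, degSum_sub] at this
  omega

lemma Effective.degSum_nonneg {E : V → ℤ} (hE : Effective E) : 0 ≤ degSum E :=
  Finset.sum_nonneg fun v _ => hE v

lemma Winnable.degSum_nonneg {D : V → ℤ} (h : Winnable G D) : 0 ≤ degSum D := by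
  obtain ⟨E, hE, hDE⟩ := h
  exact hDE.degSum_eq ▸ hE.degSum_nonneg

lemma Winnable.mono {D D' : V → ℤ} (h : Winnable G D) (hle : D ≤ D') : Winnable G D' := by
  obtain ⟨E, hE, hDE⟩ := h
  refine ⟨E + (D' - D), fun v => add_nonneg (hE v) (sub_nonneg.2 (hle v)), ?_⟩
  have : D' - (E + (D' - D)) = D - E := by abel
  show D' - (E + (D' - D)) ∈ Principal G
  rw [this]
  exact hDE

lemma Effective.eq_zero_of_degSum_eq_zero {E : V → ℤ} (hE : Effective E) (h : degSum E = 0) :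
    E = 0 := by
  funext v
  exact (Finset.sum_eq_zero_iff_of_nonneg fun v _ => hE v).1 h v (Finset.mem_univ v)

lemma LinEquiv.symm {D D' : V → ℤ} (h : LinEquiv G D D') : LinEquiv G D' D := by
  simpa [LinEquiv] using neg_mem h

lemma LinEquiv.trans {D D' D'' : V → ℤ} (h : LinEquiv G D D') (h' : LinEquiv G D' D'') :
    LinEquiv G D D'' := by
  simpa [LinEquiv] using add_mem h h'

lemma dvd_sum_mul_of_mem_principal {n : ℤ} {c D : V → ℤ} (hc : ∀ v, n ∣ lap G c v)
    (hD : D ∈ Principal G) : n ∣ ∑ v, c v * D v := by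
  obtain ⟨f, rfl⟩ := hD
  rw [sum_mul_lap_comm]
  exact Finset.dvd_sum fun v _ => (hc v).mul_right _

variable [DecidableEq V]

lemma degSum_single (v : V) (r : ℤ) : degSum (Pi.single v r) = r := by
  simp [degSum]

lemma Effective.exists_eq_single {E : V → ℤ} (hE : Effective E) (h : degSum E = 1) :
    ∃ v, E = Pi.single v 1 := by
  obtain ⟨v, hv⟩ : ∃ v, 1 ≤ E v := by
    by_contra! hlt
    have : degSum E ≤ 0 := Finset.sum_nonpos fun v _ => by linarith [hlt v]
    omega
  refine ⟨v, eq_of_sub_eq_zero (Effective.eq_zero_of_degSum_eq_zero (fun w => ?_) ?_)⟩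
  · by_cases hw : w = v
    · subst hw; simpa using hv
    · simpa [hw] using hE w
  · rw [degSum_sub, h, degSum_single, sub_self]

lemma Winnable.exists_linEquiv_single {D : V → ℤ} (h : Winnable G D) (hD : degSum D = 1) :
    ∃ w, LinEquiv G D (Pi.single w 1) := by
  obtain ⟨E, hE, hDE⟩ := h
  obtain ⟨w, rfl⟩ := hE.exists_eq_single (hDE.degSum_eq ▸ hD)
  exact ⟨w, hDE⟩

variable [Nonempty V]

lemma bddAbove_bnRank_set (D : V → ℤ) :
    BddAbove {r : ℤ | r = -1 ∨ (0 ≤ r ∧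
      ∀ E : V → ℤ, Effective E → degSum E = r → Winnable G (D - E))} := by
  obtain ⟨v⟩ := ‹Nonempty V›
  refine ⟨max (-1) (degSum D), fun r hr => ?_⟩
  rcases hr with rfl | ⟨hr, hwin⟩
  · exact le_max_left _ _
  · have hE : (0 : V → ℤ) ≤ Pi.single v r := Pi.single_nonneg.2 hr
    have := (hwin _ hE (degSum_single v r)).degSum_nonneg
    rw [degSum_sub, degSum_single] at this
    exact le_max_of_le_right (by omega)

lemma one_le_bnRank_iff {D : V → ℤ} :
    1 ≤ bnRank G D ↔ ∀ v, Winnable G (D - Pi.single v 1) := by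
  constructor
  · intro h v
    rcases Int.csSup_mem ⟨-1, Or.inl rfl⟩ (bddAbove_bnRank_set D) with hr | ⟨hr, hwin⟩
    · exact absurd h (by rw [bnRank, hr]; omega)
    have hE : (0 : V → ℤ) ≤ Pi.single v (bnRank G D) := Pi.single_nonneg.2 hr
    refine (hwin _ hE (degSum_single v _)).mono fun w => ?_
    by_cases hw : w = v
    · subst hw; simp only [Pi.sub_apply, Pi.single_eq_same]; exact sub_le_sub_left h _
    · simp [hw]
  · intro h
    refine le_csSup (bddAbove_bnRank_set D) (Or.inr ⟨zero_le_one, fun E hE hdeg => ?_⟩)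
    obtain ⟨v, rfl⟩ := hE.exists_eq_single hdeg
    exact h v

lemma exists_linEquiv_single_add_single {D : V → ℤ} (hdeg : degSum D = 2)
    (hrank : 1 ≤ bnRank G D) (v : V) : ∃ w, LinEquiv G D (Pi.single v 1 + Pi.single w 1) := by
  obtain ⟨w, hw⟩ := (one_le_bnRank_iff.1 hrank v).exists_linEquiv_single
    (by rw [degSum_sub, hdeg, degSum_single]; rfl)
  exact ⟨w, by simpa only [LinEquiv, sub_sub] using hw⟩

end General

lemma lap_G2 (f : Fin 6 → ℤ) : lap G2 f =
    ![3 * f 0 - (f 1 + f 2 + f 3),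
      3 * f 1 - (f 0 + f 2 + f 3),
      4 * f 2 - (f 0 + f 1 + f 4 + f 5),
      2 * f 3 - (f 0 + f 1),
      2 * f 4 - (f 2 + f 5),
      2 * f 5 - (f 2 + f 4)] := by
  funext v
  simp only [lap, AddMonoidHom.coe_mk, ZeroHom.coe_mk, SimpleGraph.degree,
    SimpleGraph.neighborFinset_eq_filter, Finset.card_filter, Finset.sum_filter, Fin.sum_univ_six]
  fin_cases v <;> simp [G2]

def divUV : Fin 6 → ℤ := Pi.single 0 1 + Pi.single 1 1

lemma degSum_divUV : degSum divUV = 2 := by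
  simp [divUV, degSum, Finset.sum_add_distrib]

lemma winnable_divUV_sub_single (w : Fin 6) : Winnable G2 (divUV - Pi.single w 1) := by
  obtain ⟨w', f, hf⟩ : ∃ w' f, lap G2 f = divUV - Pi.single w 1 - Pi.single w' 1 := by
    fin_cases w
    exacts [⟨1, 0, by rw [lap_G2]; decide⟩, ⟨0, 0, by rw [lap_G2]; decide⟩,
      ⟨2, ![1, 1, 0, 1, 0, 0], by rw [lap_G2]; decide⟩,
      ⟨3, ![1, 1, 1, 0, 1, 1], by rw [lap_G2]; decide⟩,
      ⟨5, ![2, 2, 1, 2, 0, 0], by rw [lap_G2]; decide⟩,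
      ⟨4, ![2, 2, 1, 2, 0, 0], by rw [lap_G2]; decide⟩]
  exact ⟨Pi.single w' 1, (Pi.single_nonneg.2 zero_le_one : (0 : Fin 6 → ℤ) ≤ _), f, hf⟩

lemma one_le_bnRank_divUV : 1 ≤ bnRank G2 divUV :=
  one_le_bnRank_iff.2 winnable_divUV_sub_single

def characterWeights : Fin 6 → ℤ := ![19, 1, 10, 22, 18, 2]

lemma eq_one_of_linEquiv_single_add_single {a b : Fin 6}
    (h : LinEquiv G2 (Pi.single 0 1 + Pi.single a 1) (Pi.single 1 1 + Pi.single b 1)) :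
    a = 1 := by
  have hc : ∀ v, (24 : ℤ) ∣ lap G2 characterWeights v := by
    rw [lap_G2]; decide
  have key : ∀ a b : Fin 6, (24 : ℤ) ∣ ∑ v, characterWeights v *
      (Pi.single 0 1 + Pi.single a 1 - (Pi.single 1 1 + Pi.single b 1) : Fin 6 → ℤ) v →
      a = 1 := by
    decide
  exact key a b (dvd_sum_mul_of_mem_principal hc h)

/-- `G₂` has exactly one divisor class of degree 2 and Baker–Norine rank at least 1. -/
theorem G2_unique_degTwo_rankGeOne_class :
    ∃! c : Pic G2, ∃ D : Fin 6 → ℤ,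
      QuotientAddGroup.mk' (Principal G2) D = c ∧ degSum D = 2 ∧ 1 ≤ bnRank G2 D := by
  refine ⟨QuotientAddGroup.mk' _ divUV, ⟨divUV, rfl, degSum_divUV, one_le_bnRank_divUV⟩, ?_⟩
  rintro _ ⟨D, rfl, hdeg, hrank⟩
  obtain ⟨a, ha⟩ := exists_linEquiv_single_add_single hdeg hrank 0
  obtain ⟨b, hb⟩ := exists_linEquiv_single_add_single hdeg hrank 1
  obtain rfl : a = 1 := eq_one_of_linEquiv_single_add_single (ha.symm.trans hb)
  exact QuotientAddGroup.eq_iff_sub_mem.2 ha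

end BNGraph
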